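/- arXiv:1605.05457 — 3 statements merged into one kernel-verified Lean document; each statement's English description precedes it below -/
import Mathlib

section
/- Let I ⊂ ℝ be an open interval and f : I → ℝ a C^j function (j ≥ 1) such that |f^{(j)}(x)| ≥ δ for all x ∈ I, where δ > 0. Then there is a constant C depending only on j such that for every ε > 0 the Lebesgue measure of the set {x ∈ I : |f(x)| < ε} is at most C·(ε/δ)^{1/j}. -/
/-!
Induction on `j`. For `j = 1`, the mean value theorem gives `δ |y - x| ≤ |f y - f x| < 2ε` for any
two points of `{|f| < ε}`, so this set lies in a ball of radius `2ε/δ`. For the step from `j` to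
`j + 1`, apply the case `j = 1` to `f^{(j)}` with threshold `δ t`, where `t = (ε/δ)^{1/(j+1)}`:
the set `{|f^{(j)}| < δ t}` lies in a ball of radius `2t`, and on each of the (at most two)
subintervals outside that ball `|f^{(j)}| ≥ δ t`, so the induction hypothesis bounds the measure of
`{|f| < ε}` there by `C (ε/(δ t))^{1/j} = C t`. The choice of `t` balances the two contributions.
-/

open MeasureTheory Set Metric

theorem mul_abs_sub_le_abs_sub_of_le_abs_deriv {g g' : ℝ → ℝ} {s : Set ℝ} {δ : ℝ}
    [hs : s.OrdConnected] (hg : ∀ x ∈ s, HasDerivAt g (g' x) x) (hδ : ∀ x ∈ s, δ ≤ |g' x|)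
    {x y : ℝ} (hx : x ∈ s) (hy : y ∈ s) : δ * |y - x| ≤ |g y - g x| := by
  wlog hxy : x ≤ y generalizing x y
  · rw [abs_sub_comm y, abs_sub_comm (g y)]
    exact this hy hx (le_of_not_ge hxy)
  rcases hxy.eq_or_lt with rfl | hlt
  · simp
  have hIcc : Icc x y ⊆ s := hs.out hx hy
  obtain ⟨c, hc, hslope⟩ := exists_hasDerivAt_eq_slope g g' hlt
    (fun z hz => (hg z (hIcc hz)).continuousAt.continuousWithinAt)
    (fun z hz => hg z (hIcc (Ioo_subset_Icc_self hz)))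
  have := hδ c (hIcc (Ioo_subset_Icc_self hc))
  rwa [hslope, abs_div, abs_of_pos (sub_pos.2 hlt), le_div_iff₀ (sub_pos.2 hlt),
    ← abs_of_pos (sub_pos.2 hlt)] at this

theorem exists_sublevel_subset_closedBall_of_le_abs_deriv {g g' : ℝ → ℝ} {s : Set ℝ} {δ : ℝ}
    [s.OrdConnected] (hg : ∀ x ∈ s, HasDerivAt g (g' x) x) (hδ₀ : 0 < δ)
    (hδ : ∀ x ∈ s, δ ≤ |g' x|) (ε : ℝ) :
    ∃ c, {x ∈ s | |g x| < ε} ⊆ closedBall c (2 * ε / δ) := by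
  rcases eq_empty_or_nonempty {x ∈ s | |g x| < ε} with hempty | ⟨c, hcs, hgc⟩
  · exact ⟨0, hempty ▸ empty_subset _⟩
  refine ⟨c, fun y ⟨hys, hgy⟩ => ?_⟩
  rw [mem_closedBall, Real.dist_eq, le_div_iff₀ hδ₀, mul_comm]
  calc δ * |y - c| ≤ |g y - g c| := mul_abs_sub_le_abs_sub_of_le_abs_deriv hg hδ hcs hys
    _ ≤ |g y| + |g c| := abs_sub _ _
    _ ≤ 2 * ε := by linarith

theorem hasDerivAt_iteratedDerivWithin_of_isOpen {n : ℕ} {f : ℝ → ℝ} {s : Set ℝ} (hs : IsOpen s)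
    (hf : ContDiffOn ℝ (n + 1) f s) {x : ℝ} (hx : x ∈ s) :
    HasDerivAt (iteratedDerivWithin n f s) (iteratedDerivWithin (n + 1) f s x) x := by
  have hdiff := hf.differentiableOn_iteratedDerivWithin (m := n)
    (by exact_mod_cast n.lt_succ_self) hs.uniqueDiffOn
  rw [iteratedDerivWithin_succ, derivWithin_of_isOpen hs hx]
  exact ((hdiff x hx).differentiableAt (hs.mem_nhds hx)).hasDerivAt

theorem div_rpow_one_div_add_one_rpow_one_div {x p : ℝ} (hx : 0 < x) (hp : 0 < p) :
    (x / x ^ (1 / (p + 1))) ^ (1 / p) = x ^ (1 / (p + 1)) := by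
  rw [← Real.rpow_one_sub' hx.le, ← Real.rpow_mul hx.le]
  · congr 1; field_simp; ring
  · exact (sub_pos.2 ((div_lt_one (by positivity)).2 (by linarith))).ne'

theorem sep_Ioo_subset_closedBall_union (a b c r : ℝ) (p : ℝ → Prop) :
    {x ∈ Ioo a b | p x} ⊆
      closedBall c r ∪ {x ∈ Ioo a (min (c - r) b) | p x} ∪ {x ∈ Ioo (max (c + r) a) b | p x} := by
  rintro x ⟨hx, hp⟩
  simp only [mem_union, mem_closedBall, Real.dist_eq, abs_le, mem_ofPred_eq, mem_Ioo, lt_min_iff,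
    max_lt_iff] at *
  grind

def SublevelVolumeBound (j : ℕ) (C : ℝ) : Prop :=
  ∀ (a b : ℝ) (f : ℝ → ℝ) (δ : ℝ), 0 < δ →
    ContDiffOn ℝ j f (Ioo a b) →
    (∀ x ∈ Ioo a b, δ ≤ |iteratedDerivWithin j f (Ioo a b) x|) →
    ∀ ε > 0,
      volume {x ∈ Ioo a b | |f x| < ε} ≤ ENNReal.ofReal (C * (ε / δ) ^ ((1 : ℝ) / j))

theorem sublevelVolumeBound_one : SublevelVolumeBound 1 4 := by
  intro a b f δ hδ hf hlow ε hε
  obtain ⟨c, hsub⟩ := exists_sublevel_subset_closedBall_of_le_abs_deriv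
    (fun x hx => hasDerivAt_iteratedDerivWithin_of_isOpen (n := 0) isOpen_Ioo hf hx) hδ hlow ε
  rw [iteratedDerivWithin_zero] at hsub
  calc volume {x ∈ Ioo a b | |f x| < ε} ≤ volume (closedBall c (2 * ε / δ)) := measure_mono hsub
    _ = ENNReal.ofReal (4 * (ε / δ) ^ ((1 : ℝ) / (1 : ℕ))) := by
      rw [Real.volume_closedBall, Nat.cast_one, div_one, Real.rpow_one]
      ring_nf

theorem SublevelVolumeBound.volume_le_of_subset {j : ℕ} {C : ℝ} (hB : SublevelVolumeBound j C)
    {a b a' b' η ε : ℝ} {f : ℝ → ℝ} (hsub : Ioo a' b' ⊆ Ioo a b) (hf : ContDiffOn ℝ j f (Ioo a b))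
    (hη : 0 < η) (hlow : ∀ x ∈ Ioo a' b', η ≤ |iteratedDerivWithin j f (Ioo a b) x|) (hε : 0 < ε) :
    volume {x ∈ Ioo a' b' | |f x| < ε} ≤ ENNReal.ofReal (C * (ε / η) ^ ((1 : ℝ) / j)) := by
  refine hB a' b' f η hη (hf.mono hsub) (fun x hx => ?_) ε hε
  rw [iteratedDerivWithin_congr_right_of_isOpen f j isOpen_Ioo isOpen_Ioo ⟨hx, hsub hx⟩]
  exact hlow x hx

theorem SublevelVolumeBound.succ {j : ℕ} {C : ℝ} (hB : SublevelVolumeBound j C) (hj : 1 ≤ j)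
    (hC : 0 ≤ C) : SublevelVolumeBound (j + 1) (4 + 2 * C) := by
  intro a b f δ hδ hf hlow ε hε
  set t := (ε / δ) ^ ((1 : ℝ) / (j + 1)) with ht
  have ht₀ : 0 < t := by positivity
  obtain ⟨c, hsub⟩ := exists_sublevel_subset_closedBall_of_le_abs_deriv
    (fun x hx => hasDerivAt_iteratedDerivWithin_of_isOpen isOpen_Ioo hf hx) hδ hlow (δ * t)
  rw [show 2 * (δ * t) / δ = 2 * t by field_simp] at hsub
  have hf' : ContDiffOn ℝ j f (Ioo a b) := hf.of_le (by exact_mod_cast j.le_succ)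
  have tail : ∀ {a' b'}, Ioo a' b' ⊆ Ioo a b → Disjoint (Ioo a' b') (closedBall c (2 * t)) →
      volume {x ∈ Ioo a' b' | |f x| < ε} ≤ ENNReal.ofReal (C * t) := by
    intro a' b' hsub' hdisj
    have hlow' : ∀ x ∈ Ioo a' b', δ * t ≤ |iteratedDerivWithin j f (Ioo a b) x| :=
      fun x hx => not_lt.1 fun hlt => hdisj.notMem_of_mem_left hx (hsub ⟨hsub' hx, hlt⟩)
    convert hB.volume_le_of_subset hsub' hf' (by positivity) hlow' hε using 3
    rw [← div_div, ht, div_rpow_one_div_add_one_rpow_one_div (by positivity)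
      (by exact_mod_cast hj)]
  calc volume {x ∈ Ioo a b | |f x| < ε}
      ≤ volume (closedBall c (2 * t)) + volume {x ∈ Ioo a (min (c - 2 * t) b) | |f x| < ε}
          + volume {x ∈ Ioo (max (c + 2 * t) a) b | |f x| < ε} :=
        (measure_mono (sep_Ioo_subset_closedBall_union a b c (2 * t) _)).trans
          ((measure_union_le _ _).trans (add_le_add_left (measure_union_le _ _) _))
    _ ≤ ENNReal.ofReal (4 * t) + ENNReal.ofReal (C * t) + ENNReal.ofReal (C * t) := by
      gcongr
      · rw [Real.volume_closedBall, ← mul_assoc]; norm_num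
      · exact tail (fun x hx => ⟨hx.1, hx.2.trans_le (min_le_right _ _)⟩)
          (by rw [Real.closedBall_eq_Icc, disjoint_left]; grind)
      · exact tail (fun x hx => ⟨(le_max_right _ _).trans_lt hx.1, hx.2⟩)
          (by rw [Real.closedBall_eq_Icc, disjoint_left]; grind)
    _ = ENNReal.ofReal ((4 + 2 * C) * (ε / δ) ^ ((1 : ℝ) / (j + 1 : ℕ))) := by
      rw [← ENNReal.ofReal_add (by positivity) (by positivity),
        ← ENNReal.ofReal_add (by positivity) (by positivity), Nat.cast_succ, ← ht]
      ring_nf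

/-- Measure estimate for functions with a large `j`-th derivative:
if `|f^{(j)}| ≥ δ` on an open interval, then `{|f| < ε}` has measure
at most `C (ε/δ)^{1/j}` with `C = C(j)`. -/
theorem measure_small_values_of_iteratedDeriv_lower_bound
    (j : ℕ) (hj : 1 ≤ j) :
    ∃ C > 0, ∀ (a b : ℝ) (f : ℝ → ℝ) (δ : ℝ), 0 < δ →
      ContDiffOn ℝ j f (Ioo a b) →
      (∀ x ∈ Ioo a b, δ ≤ |iteratedDerivWithin j f (Ioo a b) x|) →
      ∀ ε > 0,
        volume {x ∈ Ioo a b | |f x| < ε} ≤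
          ENNReal.ofReal (C * (ε / δ) ^ ((1 : ℝ) / j)) := by
  induction j, hj using Nat.le_induction with
  | base => exact ⟨4, by norm_num, sublevelVolumeBound_one⟩
  | succ j hj ih =>
    obtain ⟨C, hC, hB : SublevelVolumeBound j C⟩ := ih
    exact ⟨4 + 2 * C, by positivity, hB.succ hj hC.le⟩
end

section
/- Let A(t) = diag(a₁(t),…,a_N(t)) be a real diagonal N×N matrix and B(t) a Hermitian N×N matrix, both C¹ on an interval I ⊂ ℝ. Assume a'_j(t) ≥ 1 for all j and all t ∈ I, and ‖B'(t)‖ ≤ 1/2 for all t ∈ I. Then for every ε > 0, the operator norm ‖(A(t)+B(t))^{-1}‖ ≤ 1/ε holds for all t ∈ I outside a set of Lebesgue measure at most C·N·ε, where C is an absolute constant. -/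
/-!
Write `H(t) = A(t) + B(t)`. By the mean value theorem, `H(t₂) ≥ H(t₁) + (t₂ - t₁)/2` as quadratic
forms whenever `t₁ ≤ t₂`, so by Weyl's monotonicity principle every eigenvalue `λ_k(t)` of `H(t)`,
counted in decreasing order, grows at rate at least `1/2`. Hence `{t : |λ_k(t)| < ε}` has
diameter at most `4ε`, and outside the union of these `N` sets all eigenvalues of the Hermitian
matrix `H(t)` have modulus at least `ε`, i.e. `‖H(t)⁻¹‖ ≤ 1/ε`. This gives `C = 4`.
-/

open MeasureTheory Set Module RCLike Submodule
open scoped InnerProductSpace Matrix.Norms.L2Operator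

namespace OrthonormalBasis

variable {ι 𝕜 E : Type*} [Fintype ι] [RCLike 𝕜] [NormedAddCommGroup E] [InnerProductSpace 𝕜 E]
  (b : OrthonormalBasis ι 𝕜 E)

theorem repr_apply_eq_zero_of_mem_span {s : Set ι} {v : E} (hv : v ∈ span 𝕜 (b '' s)) {i : ι}
    (hi : i ∉ s) : b.repr v i = 0 := by
  rw [← b.coe_toBasis, Basis.mem_span_image] at hv
  rw [← b.coe_toBasis_repr_apply]
  exact Finsupp.notMem_support_iff.1 fun h => hi (hv h)

theorem finrank_span_image (s : Finset ι) : finrank 𝕜 (span 𝕜 (b '' s)) = s.card := by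
  rw [Set.image_eq_range]
  exact (finrank_span_eq_card (b.orthonormal.linearIndependent.comp _ Subtype.val_injective)).trans
    (Fintype.card_coe s)

end OrthonormalBasis

namespace LinearMap.IsSymmetric

variable {𝕜 E : Type*} [RCLike 𝕜] [NormedAddCommGroup E] [InnerProductSpace 𝕜 E]
  [FiniteDimensional 𝕜 E] {T : E →ₗ[𝕜] E} {n : ℕ} (hT : T.IsSymmetric) (hn : finrank 𝕜 E = n)

theorem re_inner_apply_self_eq_sum (v : E) :
    re ⟪T v, v⟫_𝕜 = ∑ i, hT.eigenvalues hn i * ‖(hT.eigenvectorBasis hn).repr v i‖ ^ 2 := by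
  rw [← (hT.eigenvectorBasis hn).repr.inner_map_map, PiLp.inner_apply, map_sum]
  refine Finset.sum_congr rfl fun i _ => ?_
  rw [eigenvectorBasis_apply_self_apply, inner_apply, map_mul (starRingEnd 𝕜), conj_ofReal,
    mul_left_comm, mul_conj, ← ofReal_pow, ← ofReal_mul, ofReal_re]

theorem norm_apply_sq_eq_sum (v : E) :
    ‖T v‖ ^ 2 = ∑ i, hT.eigenvalues hn i ^ 2 * ‖(hT.eigenvectorBasis hn).repr v i‖ ^ 2 := by
  rw [← (hT.eigenvectorBasis hn).repr.norm_map, EuclideanSpace.norm_sq_eq]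
  simp_rw [eigenvectorBasis_apply_self_apply, norm_mul, mul_pow, norm_ofReal, sq_abs]

theorem norm_sq_eq_sum (v : E) :
    ‖v‖ ^ 2 = ∑ i, ‖(hT.eigenvectorBasis hn).repr v i‖ ^ 2 := by
  rw [← (hT.eigenvectorBasis hn).repr.norm_map, EuclideanSpace.norm_sq_eq]

theorem mul_norm_sq_le_re_inner_of_mem_span {s : Set (Fin n)} {μ : ℝ}
    (hμ : ∀ i ∈ s, μ ≤ hT.eigenvalues hn i) {v : E}
    (hv : v ∈ span 𝕜 (hT.eigenvectorBasis hn '' s)) : μ * ‖v‖ ^ 2 ≤ re ⟪T v, v⟫_𝕜 := by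
  rw [hT.norm_sq_eq_sum hn, hT.re_inner_apply_self_eq_sum hn, Finset.mul_sum]
  refine Finset.sum_le_sum fun i _ => ?_
  by_cases hi : i ∈ s
  · gcongr
    exact hμ i hi
  · simp [(hT.eigenvectorBasis hn).repr_apply_eq_zero_of_mem_span hv hi]

theorem re_inner_le_mul_norm_sq_of_mem_span {s : Set (Fin n)} {μ : ℝ}
    (hμ : ∀ i ∈ s, hT.eigenvalues hn i ≤ μ) {v : E}
    (hv : v ∈ span 𝕜 (hT.eigenvectorBasis hn '' s)) : re ⟪T v, v⟫_𝕜 ≤ μ * ‖v‖ ^ 2 := by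
  rw [hT.norm_sq_eq_sum hn, hT.re_inner_apply_self_eq_sum hn, Finset.mul_sum]
  refine Finset.sum_le_sum fun i _ => ?_
  by_cases hi : i ∈ s
  · gcongr
    exact hμ i hi
  · simp [(hT.eigenvectorBasis hn).repr_apply_eq_zero_of_mem_span hv hi]

theorem eigenvalues_add_le_eigenvalues {S : E →ₗ[𝕜] E} (hS : S.IsSymmetric) {δ : ℝ}
    (h : ∀ v, re ⟪T v, v⟫_𝕜 + δ * ‖v‖ ^ 2 ≤ re ⟪S v, v⟫_𝕜) (k : Fin n) :
    hT.eigenvalues hn k + δ ≤ hS.eigenvalues hn k := by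
  -- Courant–Fischer: the top `k + 1` eigenvectors of `T` and the bottom `n - k` eigenvectors
  -- of `S` span subspaces of total dimension `n + 1`, which must meet.
  set V := span 𝕜 (hT.eigenvectorBasis hn '' ↑(Finset.Iic k))
  set U := span 𝕜 (hS.eigenvectorBasis hn '' ↑(Finset.Ici k))
  have hVU : ¬Disjoint V U := by
    intro hdisj
    have := Submodule.finrank_add_finrank_le_of_disjoint hdisj
    rw [OrthonormalBasis.finrank_span_image, OrthonormalBasis.finrank_span_image, hn,
      Fin.card_Iic, Fin.card_Ici] at this
    omega
  obtain ⟨v, hvV, hvU, hv⟩ : ∃ v ∈ V, v ∈ U ∧ v ≠ 0 := by simpa [disjoint_def] using hVU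
  have hT_ge : hT.eigenvalues hn k * ‖v‖ ^ 2 ≤ re ⟪T v, v⟫_𝕜 :=
    hT.mul_norm_sq_le_re_inner_of_mem_span hn
      (fun i hi => hT.eigenvalues_antitone hn (Finset.mem_Iic.1 hi)) hvV
  have hS_le : re ⟪S v, v⟫_𝕜 ≤ hS.eigenvalues hn k * ‖v‖ ^ 2 :=
    hS.re_inner_le_mul_norm_sq_of_mem_span hn
      (fun i hi => hS.eigenvalues_antitone hn (Finset.mem_Ici.1 hi)) hvU
  have hv : 0 < ‖v‖ ^ 2 := by positivity
  nlinarith [h v]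

theorem mul_norm_le_norm_apply {ε : ℝ} (hε : 0 ≤ ε) (h : ∀ i, ε ≤ |hT.eigenvalues hn i|)
    (v : E) : ε * ‖v‖ ≤ ‖T v‖ := by
  have hsq : (ε * ‖v‖) ^ 2 ≤ ‖T v‖ ^ 2 := by
    rw [mul_pow, hT.norm_sq_eq_sum hn, hT.norm_apply_sq_eq_sum hn, Finset.mul_sum]
    refine Finset.sum_le_sum fun i _ => mul_le_mul_of_nonneg_right ?_ (by positivity)
    simpa using pow_le_pow_left₀ hε (h i) 2
  exact (pow_le_pow_iff_left₀ (by positivity) (norm_nonneg _) two_ne_zero).1 hsq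

end LinearMap.IsSymmetric

theorem Convex.mul_sub_le_image_sub_of_le_derivWithin {D : Set ℝ} (hD : Convex ℝ D)
    (hDo : IsOpen D) {f : ℝ → ℝ} (hf : DifferentiableOn ℝ f D) {C : ℝ}
    (hf' : ∀ x ∈ D, C ≤ derivWithin f D x) :
    ∀ x ∈ D, ∀ y ∈ D, x ≤ y → C * (y - x) ≤ f y - f x := by
  refine hD.mul_sub_le_image_sub_of_le_deriv hf.continuousOn ?_ fun x hx => ?_ <;>
    rw [hDo.interior_eq] at *
  · exact hf
  · rw [← derivWithin_of_isOpen hDo hx]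
    exact hf' x hx

theorem ContinuousLinearMap.neg_norm_mul_sq_le_re_inner_apply_self {𝕜 E : Type*} [RCLike 𝕜]
    [NormedAddCommGroup E] [InnerProductSpace 𝕜 E] (A : E →L[𝕜] E) (v : E) :
    -(‖A‖ * ‖v‖ ^ 2) ≤ re ⟪A v, v⟫_𝕜 := by
  have := re_inner_le_norm (𝕜 := 𝕜) (-A v) v
  rw [inner_neg_left, map_neg, norm_neg] at this
  nlinarith [A.le_opNorm v, norm_nonneg v]

namespace Matrix

variable {𝕜 n : Type*} [RCLike 𝕜] [Fintype n] [DecidableEq n]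

theorem mul_norm_sq_le_re_inner_diagonal {f : n → ℝ} {α : ℝ} (h : ∀ j, α ≤ f j)
    (v : EuclideanSpace 𝕜 n) :
    α * ‖v‖ ^ 2 ≤ re ⟪toEuclideanLin (diagonal fun j => (f j : 𝕜)) v, v⟫_𝕜 := by
  rw [EuclideanSpace.norm_sq_eq, PiLp.inner_apply, map_sum, Finset.mul_sum]
  refine Finset.sum_le_sum fun j _ => ?_
  simp only [toLpLin_apply, WithLp.ofLp_toLp, mulVec_diagonal]
  rw [inner_apply, map_mul (starRingEnd 𝕜), conj_ofReal, mul_left_comm, mul_conj, ← ofReal_pow,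
    ← ofReal_mul, ofReal_re]
  gcongr
  exact h j

theorem re_inner_diagonal_add_le {f g : n → ℝ} {A B : Matrix n n 𝕜} {α : ℝ}
    (hfg : ∀ j, α ≤ g j - f j) (v : EuclideanSpace 𝕜 n) :
    re ⟪toEuclideanLin (diagonal (fun j => (f j : 𝕜)) + A) v, v⟫_𝕜 + (α - ‖B - A‖) * ‖v‖ ^ 2 ≤
      re ⟪toEuclideanLin (diagonal (fun j => (g j : 𝕜)) + B) v, v⟫_𝕜 := by
  have hsplit : diagonal (fun j => (g j : 𝕜)) + B =
      diagonal (fun j => (f j : 𝕜)) + A +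
        (diagonal (fun j => ((g j - f j : ℝ) : 𝕜)) + (B - A)) := by
    ext i j
    rcases eq_or_ne i j with rfl | hij
    · simp only [add_apply, diagonal_apply_eq, sub_apply, ofReal_sub]
      ring
    · simp [hij]
  have hdiag := mul_norm_sq_le_re_inner_diagonal (𝕜 := 𝕜) hfg v
  have hpert : -(‖B - A‖ * ‖v‖ ^ 2) ≤ re ⟪toEuclideanLin (B - A) v, v⟫_𝕜 :=
    (toEuclideanCLM (n := n) (𝕜 := 𝕜) (B - A)).neg_norm_mul_sq_le_re_inner_apply_self v
  simp only [hsplit, map_add, LinearMap.add_apply, inner_add_left]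
  linarith

theorem isUnit_and_norm_inv_le_of_mul_norm_le {A : Matrix n n 𝕜} {ε : ℝ} (hε : 0 < ε)
    (h : ∀ v, ε * ‖v‖ ≤ ‖toEuclideanLin A v‖) : IsUnit A ∧ ‖A⁻¹‖ ≤ 1 / ε := by
  have hA : IsUnit A := by
    refine mulVec_injective_iff_isUnit.1 fun x y hxy => ?_
    have := h (WithLp.toLp 2 (x - y))
    rw [toLpLin_apply, WithLp.ofLp_toLp, mulVec_sub, hxy, sub_self, WithLp.toLp_zero,
      norm_zero] at this
    have hxy0 := norm_eq_zero.1 (le_antisymm (nonpos_of_mul_nonpos_right this hε) (norm_nonneg _))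
    exact sub_eq_zero.1 (congrArg WithLp.ofLp hxy0)
  refine ⟨hA, ?_⟩
  rw [cstar_norm_def]
  refine ContinuousLinearMap.opNorm_le_bound _ (by positivity) fun v => ?_
  have hinv : toEuclideanLin A (toEuclideanCLM (n := n) (𝕜 := 𝕜) A⁻¹ v) = v := by
    change toEuclideanCLM (n := n) (𝕜 := 𝕜) A (toEuclideanCLM (n := n) (𝕜 := 𝕜) A⁻¹ v) = v
    rw [← mul_apply_eq_comp, ← map_mul, mul_nonsing_inv A ((isUnit_iff_isUnit_det A).1 hA),
      map_one, one_apply_eq_self]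
  have := h (toEuclideanCLM (n := n) (𝕜 := 𝕜) A⁻¹ v)
  rw [hinv] at this
  rw [div_mul_eq_mul_div, one_mul, le_div_iff₀ hε, mul_comm]
  exact this

theorem IsHermitian.isUnit_and_norm_inv_le {A : Matrix n n 𝕜} (hA : A.IsHermitian) {ε : ℝ}
    (hε : 0 < ε) (h : ∀ k, ε ≤ |hA.eigenvalues₀ k|) : IsUnit A ∧ ‖A⁻¹‖ ≤ 1 / ε :=
  isUnit_and_norm_inv_le_of_mul_norm_le hε <|
    (isSymmetric_toEuclideanLin_iff.2 hA).mul_norm_le_norm_apply finrank_euclideanSpace hε.le h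


theorem IsHermitian.eigenvalues₀_add_le_eigenvalues₀ {A B : Matrix n n 𝕜} (hA : A.IsHermitian)
    (hB : B.IsHermitian) {δ : ℝ}
    (h : ∀ v, re ⟪toEuclideanLin A v, v⟫_𝕜 + δ * ‖v‖ ^ 2 ≤ re ⟪toEuclideanLin B v, v⟫_𝕜)
    (k : Fin (Fintype.card n)) : hA.eigenvalues₀ k + δ ≤ hB.eigenvalues₀ k :=
  (isSymmetric_toEuclideanLin_iff.2 hA).eigenvalues_add_le_eigenvalues finrank_euclideanSpace
    (isSymmetric_toEuclideanLin_iff.2 hB) h k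

theorem exists_measurableSet_volume_le_and_norm_inv_le {H : ℝ → Matrix n n 𝕜} {I : Set ℝ}
    (hH : ∀ t ∈ I, (H t).IsHermitian) {κ : ℝ} (hκ : 0 < κ)
    (hgrowth : ∀ t₁ ∈ I, ∀ t₂ ∈ I, t₁ ≤ t₂ → ∀ v,
      re ⟪toEuclideanLin (H t₁) v, v⟫_𝕜 + κ * (t₂ - t₁) * ‖v‖ ^ 2 ≤
        re ⟪toEuclideanLin (H t₂) v, v⟫_𝕜)
    {ε : ℝ} (hε : 0 < ε) :
    ∃ E : Set ℝ, MeasurableSet E ∧ volume E ≤ ENNReal.ofReal (Fintype.card n * (2 * ε / κ)) ∧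
      ∀ t ∈ I \ E, IsUnit (H t) ∧ ‖(H t)⁻¹‖ ≤ 1 / ε := by
  let S (k : Fin (Fintype.card n)) : Set ℝ :=
    {t | ∃ ht : t ∈ I, |(hH t ht).eigenvalues₀ k| < ε}
  have hS_close (k) : ∀ t₁ ∈ S k, ∀ t₂ ∈ S k, t₁ ≤ t₂ → κ * (t₂ - t₁) < 2 * ε := by
    rintro t₁ ⟨h₁, habs₁⟩ t₂ ⟨h₂, habs₂⟩ h12
    have := (hH t₁ h₁).eigenvalues₀_add_le_eigenvalues₀ (hH t₂ h₂) (hgrowth t₁ h₁ t₂ h₂ h12) k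
    linarith [abs_lt.1 habs₁, abs_lt.1 habs₂]
  have hS_dist (k) : ∀ t₁ ∈ S k, ∀ t₂ ∈ S k, dist t₁ t₂ ≤ 2 * ε / κ := by
    intro t₁ h₁ t₂ h₂
    rw [Real.dist_eq, le_div_iff₀ hκ, mul_comm]
    rcases le_total t₁ t₂ with h12 | h21
    · rw [abs_sub_comm, abs_of_nonneg (sub_nonneg.2 h12)]
      exact (hS_close k t₁ h₁ t₂ h₂ h12).le
    · rw [abs_of_nonneg (sub_nonneg.2 h21)]
      exact (hS_close k t₂ h₂ t₁ h₁ h21).le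
  refine ⟨⋃ k, closure (S k), .iUnion fun k => isClosed_closure.measurableSet, ?_, ?_⟩
  · calc volume (⋃ k, closure (S k))
      _ ≤ ∑ k, volume (closure (S k)) := measure_iUnion_fintype_le _ _
      _ ≤ ∑ _k : Fin (Fintype.card n), ENNReal.ofReal (2 * ε / κ) := by
        gcongr with k
        exact (Real.volume_le_diam _).trans
          ((Metric.ediam_closure _).trans_le (Metric.ediam_le_of_forall_dist_le (hS_dist k)))
      _ = ENNReal.ofReal (Fintype.card n * (2 * ε / κ)) := by
        rw [Finset.sum_const, Finset.card_univ, Fintype.card_fin, nsmul_eq_mul,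
          ENNReal.ofReal_mul (Nat.cast_nonneg _), ENNReal.ofReal_natCast]
  · rintro t ⟨ht, htE⟩
    refine (hH t ht).isUnit_and_norm_inv_le hε fun k => not_lt.1 fun hlt => htE ?_
    exact mem_iUnion.2 ⟨k, subset_closure ⟨ht, hlt⟩⟩

end Matrix

/-- Inverse bound for `A(t) + B(t)` with `A` real diagonal with increasing entries
and `B` Hermitian with small derivative: `‖(A(t)+B(t))⁻¹‖ ≤ 1/ε` outside a set of
measure at most `C N ε`, `C` an absolute constant. -/
theorem diagonal_plus_hermitian_inverse_bound :
    ∃ C > 0, ∀ (N : ℕ) (c d : ℝ) (a : Fin N → ℝ → ℝ)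
      (B : ℝ → Matrix (Fin N) (Fin N) ℂ),
      (∀ j, ContDiffOn ℝ 1 (a j) (Ioo c d)) →
      (∀ j, ∀ t ∈ Ioo c d, 1 ≤ derivWithin (a j) (Ioo c d) t) →
      ContDiffOn ℝ 1 B (Ioo c d) →
      (∀ t ∈ Ioo c d, ‖derivWithin B (Ioo c d) t‖ ≤ 1 / 2) →
      (∀ t ∈ Ioo c d, (B t).IsHermitian) →
      ∀ ε > 0, ∃ E : Set ℝ, MeasurableSet E ∧
        volume E ≤ ENNReal.ofReal (C * N * ε) ∧
        ∀ t ∈ Ioo c d \ E,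
          IsUnit (Matrix.diagonal (fun j => (a j t : ℂ)) + B t) ∧
          ‖(Matrix.diagonal (fun j => (a j t : ℂ)) + B t)⁻¹‖ ≤ 1 / ε := by
  refine ⟨4, by norm_num, fun N c d a B ha ha' hB hB' hBh ε hε => ?_⟩
  have ha_growth (j) {t₁} (h₁ : t₁ ∈ Ioo c d) {t₂} (h₂ : t₂ ∈ Ioo c d) (h12 : t₁ ≤ t₂) :
      t₂ - t₁ ≤ a j t₂ - a j t₁ := by
    simpa using (convex_Ioo c d).mul_sub_le_image_sub_of_le_derivWithin isOpen_Ioo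
      ((ha j).differentiableOn one_ne_zero) (ha' j) t₁ h₁ t₂ h₂ h12
  have hB_lipschitz {t₁} (h₁ : t₁ ∈ Ioo c d) {t₂} (h₂ : t₂ ∈ Ioo c d) (h12 : t₁ ≤ t₂) :
      ‖B t₂ - B t₁‖ ≤ 1 / 2 * (t₂ - t₁) := by
    simpa [abs_of_nonneg (sub_nonneg.2 h12)] using
      (convex_Ioo c d).norm_image_sub_le_of_norm_derivWithin_le
        (hB.differentiableOn one_ne_zero) hB' h₁ h₂
  obtain ⟨E, hE, hvol, hinv⟩ := Matrix.exists_measurableSet_volume_le_and_norm_inv_le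
    (H := fun t => Matrix.diagonal (fun j => (a j t : ℂ)) + B t)
    (fun t ht => (Matrix.isHermitian_diagonal_iff.2 fun j => Complex.conj_ofReal _).add (hBh t ht))
    (by norm_num : (0 : ℝ) < 1 / 2) (fun t₁ h₁ t₂ h₂ h12 v => by
      refine (add_le_add_right (mul_le_mul_of_nonneg_right ?_ (sq_nonneg ‖v‖)) _).trans
        (Matrix.re_inner_diagonal_add_le (A := B t₁) (fun j => ha_growth j h₁ h₂ h12) v)
      linarith [hB_lipschitz h₁ h₂ h12]) hε
  refine ⟨E, hE, hvol.trans_eq ?_, hinv⟩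
  rw [Fintype.card_fin]
  congr 1
  ring
end

section
/- Fix γ = (γ₁,γ₂) with γ₁ ≥ 0, γ₂ ≥ 0 and ϰ with 0 ≤ ϰ ≤ γ₂. For a matrix A : Λ×Λ → gl(2,ℂ) indexed by a subset Λ ⊆ ℤ^d, define |A|_{γ,ϰ} = max( sup_a Σ_b ‖A_a^b‖ e_{γ,ϰ}(a,b), sup_b Σ_a ‖A_a^b‖ e_{γ,ϰ}(a,b) ), where e_{γ,ϰ}(a,b) = C e^{γ₁[a−b]} max([a−b],1)^{γ₂} min(⟨a⟩,⟨b⟩)^{ϰ} and [a−b] = min(|a−b|,|a+b|). Then for a suitable choice of the constant C (depending only on γ, ϰ, d), the norm is submultiplicative in the mixed sense: |BA|_{γ,ϰ} ≤ |A|_{γ,0} |B|_{γ,ϰ}, where (BA)_a^b = Σ_c B_a^c A_c^b. -/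
open scoped ENNReal Matrix.Norms.L2Operator

/-- Euclidean norm of an integer vector. -/
noncomputable def znorm {d : ℕ} (a : Fin d → ℤ) : ℝ :=
  Real.sqrt (∑ i, ((a i : ℝ)) ^ 2)

/-- `⟨a⟩ = max(|a|,1)`. -/
noncomputable def jap {d : ℕ} (a : Fin d → ℤ) : ℝ := max (znorm a) 1

/-- The pseudo-metric `[a-b] = min(|a-b|, |a+b|)`. -/
noncomputable def brk {d : ℕ} (a b : Fin d → ℤ) : ℝ :=
  min (znorm (a - b)) (znorm (a + b))

/-- The weight `e_{γ,ϰ}(a,b) = C e^{γ₁[a-b]} max([a-b],1)^{γ₂} min(⟨a⟩,⟨b⟩)^ϰ`. -/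
noncomputable def wt {d : ℕ} (C γ₁ γ₂ ϰ : ℝ) (a b : Fin d → ℤ) : ℝ :=
  C * Real.exp (γ₁ * brk a b) * (max (brk a b) 1) ^ γ₂ * (min (jap a) (jap b)) ^ ϰ

/-- The weighted mixed `ℓ¹`-`ℓ^∞` matrix norm `|A|_{γ,ϰ}`, valued in `ℝ≥0∞`. -/
noncomputable def mnorm {d : ℕ} (C γ₁ γ₂ ϰ : ℝ) (Λ : Set (Fin d → ℤ))
    (A : Λ → Λ → Matrix (Fin 2) (Fin 2) ℂ) : ℝ≥0∞ :=
  max (⨆ a : Λ, ∑' b : Λ, (‖A a b‖₊ : ℝ≥0∞) * ENNReal.ofReal (wt C γ₁ γ₂ ϰ a.1 b.1))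
      (⨆ b : Λ, ∑' a : Λ, (‖A a b‖₊ : ℝ≥0∞) * ENNReal.ofReal (wt C γ₁ γ₂ ϰ a.1 b.1))

/-!
Everything reduces to the pointwise estimate `e_{γ,ϰ}(a,b) ≤ e_{γ,ϰ}(a,c) e_{γ,0}(c,b)` for
`C = 2^(γ₂+ϰ)`: expanding `(BA)_a^b` and exchanging the sums over `b` (or `a`) and `c` then
bounds each row and column sum of `|BA|` by a row (column) sum of `B` times one of `A`.
For the pointwise estimate put `Y = max([a-c],1)`, `Z = max([c-b],1)`. The triangle
inequality for `[·]` gives `max([a-b],1) ≤ 2 max(Y,Z)` and `⟨a⟩ ≤ 2⟨c⟩Y`, `⟨b⟩ ≤ 2⟨c⟩Z`,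
whence `min(⟨a⟩,⟨b⟩) ≤ 2 min(Y,Z) min(⟨a⟩,⟨c⟩)`; since `ϰ ≤ γ₂` and `min(Y,Z) ≥ 1`,
`max(Y,Z)^γ₂ min(Y,Z)^ϰ ≤ (YZ)^γ₂`.
-/

section MinNormSubAdd

variable {E : Type*} [SeminormedAddCommGroup E]

lemma min_norm_sub_norm_add_le (x z y : E) :
    min ‖x - y‖ ‖x + y‖ ≤ min ‖x - z‖ ‖x + z‖ + min ‖z - y‖ ‖z + y‖ := by
  rcases min_choice ‖x - z‖ ‖x + z‖ with h₁ | h₁ <;>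
    rcases min_choice ‖z - y‖ ‖z + y‖ with h₂ | h₂ <;> rw [h₁, h₂]
  · exact (min_le_left _ _).trans (norm_sub_le_norm_sub_add_norm_sub x z y)
  · refine (min_le_right _ _).trans ?_
    rw [show x + y = (x - z) + (z + y) by abel]
    exact norm_add_le _ _
  · refine (min_le_right _ _).trans ?_
    rw [show x + y = (x + z) - (z - y) by abel]
    exact norm_sub_le _ _
  · refine (min_le_left _ _).trans ?_
    rw [show x - y = (x + z) - (z + y) by abel]
    exact norm_sub_le _ _

lemma norm_le_norm_add_min_norm_sub_norm_add (x z : E) :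
    ‖x‖ ≤ ‖z‖ + min ‖x - z‖ ‖x + z‖ := by
  rcases min_choice ‖x - z‖ ‖x + z‖ with h | h <;> rw [h]
  · exact norm_le_norm_add_norm_sub' x z
  · simpa only [add_sub_cancel_right, add_comm ‖z‖] using norm_sub_le (x + z) z

end MinNormSubAdd

noncomputable def euclideanOfInt {d : ℕ} (a : Fin d → ℤ) : EuclideanSpace ℝ (Fin d) :=
  WithLp.toLp 2 fun i => (a i : ℝ)

lemma euclideanOfInt_add {d : ℕ} (a b : Fin d → ℤ) :
    euclideanOfInt (a + b) = euclideanOfInt a + euclideanOfInt b := by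
  ext i; simp [euclideanOfInt]

lemma euclideanOfInt_sub {d : ℕ} (a b : Fin d → ℤ) :
    euclideanOfInt (a - b) = euclideanOfInt a - euclideanOfInt b := by
  ext i; simp [euclideanOfInt]

lemma znorm_eq_norm_euclideanOfInt {d : ℕ} (a : Fin d → ℤ) : znorm a = ‖euclideanOfInt a‖ := by
  simp [EuclideanSpace.norm_eq, znorm, euclideanOfInt]

lemma brk_eq_min_norm {d : ℕ} (a b : Fin d → ℤ) :
    brk a b = min ‖euclideanOfInt a - euclideanOfInt b‖ ‖euclideanOfInt a + euclideanOfInt b‖ := by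
  rw [brk, znorm_eq_norm_euclideanOfInt, znorm_eq_norm_euclideanOfInt, euclideanOfInt_add,
    euclideanOfInt_sub]

section Weight

variable {d : ℕ}

lemma one_le_jap (a : Fin d → ℤ) : 1 ≤ jap a := le_max_right _ _

lemma brk_comm (a b : Fin d → ℤ) : brk a b = brk b a := by
  rw [brk_eq_min_norm, brk_eq_min_norm, ← norm_neg, neg_sub, add_comm]

lemma brk_le_brk_add_brk (a c b : Fin d → ℤ) : brk a b ≤ brk a c + brk c b := by
  simpa only [brk_eq_min_norm] using min_norm_sub_norm_add_le _ _ _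

lemma jap_le_jap_add_brk (a c : Fin d → ℤ) : jap a ≤ jap c + brk a c := by
  have hc : znorm c ≤ jap c := le_max_left _ _
  have hbrk : 0 ≤ brk a c := (brk_eq_min_norm a c).symm ▸ le_min (norm_nonneg _) (norm_nonneg _)
  refine max_le ?_ (by linarith [one_le_jap c])
  have := norm_le_norm_add_min_norm_sub_norm_add (euclideanOfInt a) (euclideanOfInt c)
  rw [← brk_eq_min_norm, ← znorm_eq_norm_euclideanOfInt, ← znorm_eq_norm_euclideanOfInt] at this
  linarith

lemma max_brk_one_le_two_mul_max (a c b : Fin d → ℤ) :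
    max (brk a b) 1 ≤ 2 * max (max (brk a c) 1) (max (brk c b) 1) := by
  have := brk_le_brk_add_brk a c b
  calc max (brk a b) 1 ≤ max (brk a c) 1 + max (brk c b) 1 :=
        max_le (by linarith [le_max_left (brk a c) 1, le_max_left (brk c b) 1])
          (by linarith [le_max_right (brk a c) 1, le_max_right (brk c b) 1])
    _ ≤ 2 * max (max (brk a c) 1) (max (brk c b) 1) := by
        linarith [le_max_left (max (brk a c) 1) (max (brk c b) 1),
          le_max_right (max (brk a c) 1) (max (brk c b) 1)]

lemma jap_le_two_mul_jap_mul_max_brk (a c : Fin d → ℤ) :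
    jap a ≤ 2 * jap c * max (brk a c) 1 := by
  have := jap_le_jap_add_brk a c
  have := le_max_left (brk a c) 1
  have := le_max_right (brk a c) 1
  have := one_le_jap c
  nlinarith

lemma min_jap_le_two_mul_min_max_brk_mul_min_jap (a c b : Fin d → ℤ) :
    min (jap a) (jap b) ≤
      2 * min (max (brk a c) 1) (max (brk c b) 1) * min (jap a) (jap c) := by
  set μ := min (max (brk a c) 1) (max (brk c b) 1)
  have hμ : 1 ≤ μ := le_min (le_max_right _ _) (le_max_right _ _)
  have hjap_a := one_le_jap a
  have hjap_c := one_le_jap c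
  have h_a : jap a ≤ 2 * μ * jap a := by nlinarith
  have h_c : min (jap a) (jap b) ≤ 2 * μ * jap c :=
    calc min (jap a) (jap b)
        ≤ min (2 * jap c * max (brk a c) 1) (2 * jap c * max (brk c b) 1) := by
          refine min_le_min (jap_le_two_mul_jap_mul_max_brk a c) ?_
          simpa only [brk_comm b c] using jap_le_two_mul_jap_mul_max_brk b c
      _ = 2 * μ * jap c := by rw [← mul_min_of_nonneg _ _ (by positivity)]; ring
  rw [mul_min_of_nonneg _ _ (by positivity)]
  exact le_min ((min_le_left _ _).trans h_a) h_c

lemma exp_mul_brk_le {γ₁ : ℝ} (hγ₁ : 0 ≤ γ₁) (a c b : Fin d → ℤ) :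
    Real.exp (γ₁ * brk a b) ≤ Real.exp (γ₁ * brk a c) * Real.exp (γ₁ * brk c b) := by
  rw [← Real.exp_add, ← mul_add]
  gcongr
  exact brk_le_brk_add_brk a c b

lemma max_rpow_mul_min_rpow_le {Y Z γ ϰ : ℝ} (hY : 1 ≤ Y) (hZ : 1 ≤ Z) (hϰγ : ϰ ≤ γ) :
    max Y Z ^ γ * min Y Z ^ ϰ ≤ Y ^ γ * Z ^ γ := by
  calc max Y Z ^ γ * min Y Z ^ ϰ ≤ max Y Z ^ γ * min Y Z ^ γ :=
        mul_le_mul_of_nonneg_left (Real.rpow_le_rpow_of_exponent_le (le_min hY hZ) hϰγ)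
          (Real.rpow_nonneg (by positivity) _)
    _ = Y ^ γ * Z ^ γ := by
        rw [← Real.mul_rpow (by positivity) (by positivity), max_mul_min,
          Real.mul_rpow (by positivity) (by positivity)]

lemma max_brk_rpow_mul_min_jap_rpow_le {γ₂ ϰ : ℝ} (hϰ : 0 ≤ ϰ) (hϰγ : ϰ ≤ γ₂)
    (a c b : Fin d → ℤ) :
    max (brk a b) 1 ^ γ₂ * min (jap a) (jap b) ^ ϰ ≤
      2 ^ (γ₂ + ϰ) * (max (brk a c) 1 ^ γ₂ * min (jap a) (jap c) ^ ϰ) * max (brk c b) 1 ^ γ₂ := by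
  set Y := max (brk a c) 1
  set Z := max (brk c b) 1
  have hY : 1 ≤ Y := le_max_right _ _
  have hZ : 1 ≤ Z := le_max_right _ _
  have := one_le_jap a
  have := one_le_jap b
  have := one_le_jap c
  calc max (brk a b) 1 ^ γ₂ * min (jap a) (jap b) ^ ϰ
      ≤ (2 * max Y Z) ^ γ₂ * (2 * min Y Z * min (jap a) (jap c)) ^ ϰ := by
        have : 0 ≤ γ₂ := hϰ.trans hϰγ
        have := max_brk_one_le_two_mul_max a c b
        have := min_jap_le_two_mul_min_max_brk_mul_min_jap a c b
        gcongr
    _ = 2 ^ (γ₂ + ϰ) * (max Y Z ^ γ₂ * min Y Z ^ ϰ) * min (jap a) (jap c) ^ ϰ := by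
        rw [Real.mul_rpow zero_le_two (by positivity), Real.mul_rpow (by positivity) (by positivity),
          Real.mul_rpow zero_le_two (by positivity), Real.rpow_add two_pos]
        ring
    _ ≤ 2 ^ (γ₂ + ϰ) * (Y ^ γ₂ * Z ^ γ₂) * min (jap a) (jap c) ^ ϰ := by
        have := max_rpow_mul_min_rpow_le hY hZ hϰγ
        gcongr
    _ = 2 ^ (γ₂ + ϰ) * (Y ^ γ₂ * min (jap a) (jap c) ^ ϰ) * Z ^ γ₂ := by ring

lemma wt_nonneg {C : ℝ} (hC : 0 ≤ C) (γ₁ γ₂ ϰ : ℝ) (a b : Fin d → ℤ) :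
    0 ≤ wt C γ₁ γ₂ ϰ a b := by
  have := one_le_jap a
  have := one_le_jap b
  unfold wt
  positivity

lemma wt_le_mul_wt {C γ₁ γ₂ ϰ : ℝ} (hC : 2 ^ (γ₂ + ϰ) ≤ C) (hγ₁ : 0 ≤ γ₁) (hϰ : 0 ≤ ϰ)
    (hϰγ : ϰ ≤ γ₂) (a c b : Fin d → ℤ) :
    wt C γ₁ γ₂ ϰ a b ≤ wt C γ₁ γ₂ ϰ a c * wt C γ₁ γ₂ 0 c b := by
  have hC₀ : 0 ≤ C := (Real.rpow_nonneg zero_le_two _).trans hC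
  have := one_le_jap a
  have := one_le_jap b
  have := one_le_jap c
  have hexp := exp_mul_brk_le hγ₁ a c b
  have hpoly := max_brk_rpow_mul_min_jap_rpow_le hϰ hϰγ a c b
  simp only [wt, Real.rpow_zero, mul_one]
  calc C * Real.exp (γ₁ * brk a b) * max (brk a b) 1 ^ γ₂ * min (jap a) (jap b) ^ ϰ
      = C * Real.exp (γ₁ * brk a b) * (max (brk a b) 1 ^ γ₂ * min (jap a) (jap b) ^ ϰ) := by
        ring
    _ ≤ C * (Real.exp (γ₁ * brk a c) * Real.exp (γ₁ * brk c b)) *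
          (2 ^ (γ₂ + ϰ) * (max (brk a c) 1 ^ γ₂ * min (jap a) (jap c) ^ ϰ) *
            max (brk c b) 1 ^ γ₂) := by
        gcongr
    _ ≤ C * (Real.exp (γ₁ * brk a c) * Real.exp (γ₁ * brk c b)) *
          (C * (max (brk a c) 1 ^ γ₂ * min (jap a) (jap c) ^ ϰ) * max (brk c b) 1 ^ γ₂) := by
        gcongr
    _ = C * Real.exp (γ₁ * brk a c) * max (brk a c) 1 ^ γ₂ * min (jap a) (jap c) ^ ϰ *
          (C * Real.exp (γ₁ * brk c b) * max (brk c b) 1 ^ γ₂) := by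
        ring

end Weight

section SchurNorm

variable {ι : Type*}

noncomputable def schurNorm (K : ι → ι → ℝ≥0∞) : ℝ≥0∞ :=
  max (⨆ i, ∑' j, K i j) (⨆ j, ∑' i, K i j)

lemma tsum_row_le_schurNorm (K : ι → ι → ℝ≥0∞) (i : ι) : ∑' j, K i j ≤ schurNorm K :=
  (le_iSup (fun i => ∑' j, K i j) i).trans (le_max_left _ _)

lemma tsum_col_le_schurNorm (K : ι → ι → ℝ≥0∞) (j : ι) : ∑' i, K i j ≤ schurNorm K :=
  (le_iSup (fun j => ∑' i, K i j) j).trans (le_max_right _ _)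

lemma schurNorm_mono {K L : ι → ι → ℝ≥0∞} (h : ∀ i j, K i j ≤ L i j) :
    schurNorm K ≤ schurNorm L :=
  max_le_max (iSup_mono fun i => ENNReal.tsum_le_tsum fun j => h i j)
    (iSup_mono fun j => ENNReal.tsum_le_tsum fun i => h i j)

lemma schurNorm_comp_le (f g : ι → ι → ℝ≥0∞) :
    schurNorm (fun i k => ∑' j, f i j * g j k) ≤ schurNorm f * schurNorm g := by
  refine max_le (iSup_le fun i => ?_) (iSup_le fun k => ?_)
  · calc ∑' k, ∑' j, f i j * g j k = ∑' j, f i j * ∑' k, g j k := by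
          rw [ENNReal.tsum_comm]
          simp only [ENNReal.tsum_mul_left]
      _ ≤ ∑' j, f i j * schurNorm g := by
          gcongr with j
          exact tsum_row_le_schurNorm g j
      _ ≤ schurNorm f * schurNorm g := by
          rw [ENNReal.tsum_mul_right]
          gcongr
          exact tsum_row_le_schurNorm f i
  · calc ∑' i, ∑' j, f i j * g j k = ∑' j, (∑' i, f i j) * g j k := by
          rw [ENNReal.tsum_comm]
          simp only [ENNReal.tsum_mul_right]
      _ ≤ ∑' j, schurNorm f * g j k := by
          gcongr with j
          exact tsum_col_le_schurNorm f j
      _ ≤ schurNorm f * schurNorm g := by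
          rw [ENNReal.tsum_mul_left]
          gcongr
          exact tsum_col_le_schurNorm g k

lemma enorm_tsum_mul_mul_le {R : Type*} [NormedRing R] {w w₁ w₂ : ι → ι → ℝ≥0∞}
    (hw : ∀ i j k, w i k ≤ w₁ i j * w₂ j k) (B A : ι → ι → R) (i k : ι) :
    ‖∑' j, B i j * A j k‖ₑ * w i k ≤ ∑' j, (‖B i j‖ₑ * w₁ i j) * (‖A j k‖ₑ * w₂ j k) := by
  calc ‖∑' j, B i j * A j k‖ₑ * w i k ≤ (∑' j, ‖B i j‖ₑ * ‖A j k‖ₑ) * w i k := by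
        gcongr
        refine tsum_of_enorm_bounded ENNReal.summable.hasSum fun j => ?_
        simp only [enorm_eq_nnnorm]
        exact_mod_cast nnnorm_mul_le (B i j) (A j k)
    _ ≤ ∑' j, (‖B i j‖ₑ * w₁ i j) * (‖A j k‖ₑ * w₂ j k) := by
        rw [← ENNReal.tsum_mul_right]
        refine ENNReal.tsum_le_tsum fun j => ?_
        calc ‖B i j‖ₑ * ‖A j k‖ₑ * w i k ≤ ‖B i j‖ₑ * ‖A j k‖ₑ * (w₁ i j * w₂ j k) := by
              gcongr
              exact hw i j k
          _ = ‖B i j‖ₑ * w₁ i j * (‖A j k‖ₑ * w₂ j k) := by ring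

end SchurNorm

lemma mnorm_eq_schurNorm {d : ℕ} (C γ₁ γ₂ ϰ : ℝ) (Λ : Set (Fin d → ℤ))
    (A : Λ → Λ → Matrix (Fin 2) (Fin 2) ℂ) :
    mnorm C γ₁ γ₂ ϰ Λ A =
      schurNorm fun a b : Λ => ‖A a b‖ₑ * ENNReal.ofReal (wt C γ₁ γ₂ ϰ a.1 b.1) :=
  rfl

/-- Mixed submultiplicativity of the weighted matrix norm:
`|BA|_{γ,ϰ} ≤ |A|_{γ,0} |B|_{γ,ϰ}` for a suitable constant `C` in the weight. -/
theorem mnorm_mul_le (d : ℕ) (γ₁ γ₂ ϰ : ℝ) (hγ₁ : 0 ≤ γ₁) (hϰ : 0 ≤ ϰ)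
    (hϰγ : ϰ ≤ γ₂) :
    ∃ C : ℝ, 0 < C ∧ ∀ (Λ : Set (Fin d → ℤ))
      (A B : Λ → Λ → Matrix (Fin 2) (Fin 2) ℂ),
      mnorm C γ₁ γ₂ ϰ Λ (fun a b => ∑' c : Λ, B a c * A c b) ≤
        mnorm C γ₁ γ₂ 0 Λ A * mnorm C γ₁ γ₂ ϰ Λ B := by
  set C : ℝ := 2 ^ (γ₂ + ϰ)
  have hC : 0 < C := Real.rpow_pos_of_pos two_pos _
  refine ⟨C, hC, fun Λ A B => ?_⟩
  have hw (a c b : Λ) : ENNReal.ofReal (wt C γ₁ γ₂ ϰ a.1 b.1) ≤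
      ENNReal.ofReal (wt C γ₁ γ₂ ϰ a.1 c.1) * ENNReal.ofReal (wt C γ₁ γ₂ 0 c.1 b.1) := by
    rw [← ENNReal.ofReal_mul (wt_nonneg hC.le _ _ _ _ _)]
    exact ENNReal.ofReal_le_ofReal (wt_le_mul_wt le_rfl hγ₁ hϰ hϰγ _ _ _)
  simp only [mnorm_eq_schurNorm]
  rw [mul_comm]
  exact (schurNorm_mono (enorm_tsum_mul_mul_le hw B A)).trans (schurNorm_comp_le _ _)
end
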